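/- Let n, m ≥ 1 and let h ∈ ℝ^{n×m} be a fixed matrix with covariance Φ = (1/n)·hᵀh. Let W^v be a random n×n matrix with i.i.d. Gaussian N(0, 1/n) entries and let W be an independent random m×m matrix with i.i.d. standard Gaussian N(0,1) entries; set W̄_{μα} = (1/m)·Σ_{ν=1}^m W_{να}, W̃ = W − W̄, and define the one-step MixiT update h' = W^v · h · ( I_m + (1/√(nm))·W̃ ) with covariance Φ' = (1/n)·h'ᵀh'. Then the entrywise expectation satisfies E[Φ'] = Φ + (1/n)·( (1/m)·Tr(Φ) − M(Φ) )·I_m, where M(Φ) = (1/m²)·Σ_{α,β=1}^m Φ_{αβ}. -/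

import Mathlib

open MeasureTheory ProbabilityTheory Matrix
open scoped NNReal

/-- The column-centered matrix `W̃ = W − W̄`, where `W̄` replaces each entry
by the empirical average of its column. -/
noncomputable def centered (m : ℕ) (W : Fin m × Fin m → ℝ) :
    Matrix (Fin m) (Fin m) ℝ :=
  Matrix.of fun i j => W (i, j) - (1 / (m : ℝ)) * ∑ ν : Fin m, W (ν, j)

/-- One step of the MixiT update: `h' = Wᵛ · h · (I + (1/√(nm))·W̃)`. -/
noncomputable def mixitStep (n m : ℕ) (h : Matrix (Fin n) (Fin m) ℝ)
    (p : ((Fin n × Fin n) → ℝ) × ((Fin m × Fin m) → ℝ)) :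
    Matrix (Fin n) (Fin m) ℝ :=
  (Matrix.of fun i j => p.1 (i, j)) * h *
    ((1 : Matrix (Fin m) (Fin m) ℝ) +
      (Real.sqrt ((n : ℝ) * m))⁻¹ • centered m p.2)

/-!
Write `h' = Wᵛ G` with `G = h (I + c P W)`, where `c = 1/√(nm)` and `P = I - J/m` is the
centering projection, so that `W̃ = P W`. For a random matrix `X` with i.i.d. centered entries of
variance `v`, linear terms in `X` have mean zero and `E[Xᵀ M X] = v · tr M · I`. Conditionally on
`W` this gives `E[(Wᵛ G)ᵀ (Wᵛ G)] = n · (1/n) · GᵀG`, so the `Wᵛ`-average of `Φ'` is `Aᵀ Φ A`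
with `A = I + c P W`; averaging over `W` then gives `Φ + c² tr(Pᵀ Φ P) I`, and
`tr(Pᵀ Φ P) = tr(Φ P) = tr Φ - m M(Φ)` because `P` is a symmetric idempotent.
-/

lemma Matrix.transpose_mul_mul_apply_eq_sum {ι κ R : Type*} [Fintype ι] [CommSemiring R]
    (X : Matrix ι κ R) (M : Matrix ι ι R) (a b : κ) :
    (Xᵀ * M * X) a b = ∑ i, ∑ j, M i j * (X i a * X j b) := by
  simp only [mul_apply, transpose_apply, Finset.sum_mul]
  rw [Finset.sum_comm]
  exact Finset.sum_congr rfl fun i _ => Finset.sum_congr rfl fun j _ => by ring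

lemma Matrix.transpose_mul_mul_self_eq {ι κ κ' R : Type*} [Fintype ι] [Fintype κ] [CommSemiring R]
    (h : Matrix ι κ R) (A : Matrix κ κ' R) : (h * A)ᵀ * (h * A) = Aᵀ * (hᵀ * h) * A := by
  simp only [transpose_mul, Matrix.mul_assoc]

section IidEntries

variable {ι κ : Type*} [Fintype ι] [Fintype κ] {μ : Measure ℝ} [IsProbabilityMeasure μ]

lemma memLp_eval_pi (hμ : MemLp id 2 μ) (a : ι) :
    MemLp (fun x : ι → ℝ => x a) 2 (Measure.pi fun _ => μ) :=
  hμ.comp_measurePreserving (measurePreserving_eval _ a)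

lemma integral_eval_mul_eval_pi [DecidableEq ι] (hμ0 : ∫ t, t ∂μ = 0) (a b : ι) :
    ∫ x : ι → ℝ, x a * x b ∂Measure.pi (fun _ => μ) = if a = b then Var[id; μ] else 0 := by
  split_ifs with hab
  · subst hab
    rw [integral_comp_eval (f := fun t => t * t) (by fun_prop),
      variance_of_integral_eq_zero aemeasurable_id hμ0]
    simp [pow_two]
  · have hind := (iIndepFun_pi (μ := fun _ : ι => μ) (X := fun _ => id)
      fun _ => aemeasurable_id).indepFun hab
    have := hind.integral_mul_eq_mul_integral
      (measurable_pi_apply a).aestronglyMeasurable (measurable_pi_apply b).aestronglyMeasurable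
    simpa [integral_eval, hμ0] using this

lemma integrable_eval_mul_eval_pi (hμ : MemLp id 2 μ) (a b : ι) :
    Integrable (fun x : ι → ℝ => x a * x b) (Measure.pi fun _ => μ) :=
  (memLp_eval_pi hμ a).integrable_mul (memLp_eval_pi hμ b)

lemma memLp_mul_apply {κ' : Type*} (hμ : MemLp id 2 μ) (B : Matrix κ' ι ℝ) (a : κ') (b : κ) :
    MemLp (fun x : ι × κ → ℝ => (B * of fun i j => x (i, j)) a b) 2
      (Measure.pi fun _ => μ) := by
  simp only [mul_apply, of_apply]
  exact memLp_finsetSum _ fun i _ => (memLp_eval_pi hμ (i, b)).const_mul (B a i)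

lemma integral_mul_apply {κ' : Type*} (hμ : MemLp id 2 μ) (hμ0 : ∫ t, t ∂μ = 0)
    (B : Matrix κ' ι ℝ) (a : κ') (b : κ) :
    ∫ x : ι × κ → ℝ, (B * of fun i j => x (i, j)) a b ∂Measure.pi (fun _ => μ) = 0 := by
  simp only [mul_apply, of_apply]
  rw [integral_finsetSum _ fun i _ => ((memLp_eval_pi hμ _).integrable one_le_two).const_mul _]
  simp [integral_const_mul, integral_eval, hμ0]

lemma integrable_transpose_mul_mul_apply (hμ : MemLp id 2 μ) (M : Matrix ι ι ℝ) (a b : κ) :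
    Integrable (fun x : ι × κ → ℝ => ((of fun i j => x (i, j))ᵀ * M * of fun i j => x (i, j)) a b)
      (Measure.pi fun _ => μ) := by
  simp only [transpose_mul_mul_apply_eq_sum, of_apply]
  exact integrable_finsetSum _ fun i _ => integrable_finsetSum _ fun j _ =>
    (integrable_eval_mul_eval_pi hμ _ _).const_mul _

lemma integral_transpose_mul_mul_apply [DecidableEq κ] (hμ : MemLp id 2 μ) (hμ0 : ∫ t, t ∂μ = 0)
    (M : Matrix ι ι ℝ) (a b : κ) :
    ∫ x : ι × κ → ℝ, ((of fun i j => x (i, j))ᵀ * M * of fun i j => x (i, j)) a b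
        ∂Measure.pi (fun _ => μ) = Var[id; μ] * M.trace * (1 : Matrix κ κ ℝ) a b := by
  classical
  simp_rw [transpose_mul_mul_apply_eq_sum, of_apply]
  rw [integral_finsetSum (f := fun i (x : ι × κ → ℝ) => ∑ j, M i j * (x (i, a) * x (j, b))) _
    fun i _ => integrable_finsetSum _ fun j _ => (integrable_eval_mul_eval_pi hμ _ _).const_mul _]
  simp_rw [integral_finsetSum _ fun j _ => (integrable_eval_mul_eval_pi hμ _ _).const_mul _,
    integral_const_mul, integral_eval_mul_eval_pi hμ0, Prod.ext_iff]
  by_cases hab : a = b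
  · subst hab
    simp [trace, Finset.mul_sum, mul_comm]
  · simp [hab]

lemma integral_conj_one_add_mul_apply [DecidableEq κ] (hμ : MemLp id 2 μ)
    (hμ0 : ∫ t, t ∂μ = 0) (B : Matrix κ ι ℝ) (S : Matrix κ κ ℝ) (a b : κ) :
    ∫ x : ι × κ → ℝ, ((1 + B * of fun i j => x (i, j))ᵀ * S *
        (1 + B * of fun i j => x (i, j)) : Matrix κ κ ℝ) a b
        ∂Measure.pi (fun _ => μ) =
      S a b + Var[id; μ] * (Bᵀ * S * B).trace * (1 : Matrix κ κ ℝ) a b := by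
  have expand : ∀ X : Matrix ι κ ℝ, ((1 + B * X)ᵀ * S * (1 + B * X) : Matrix κ κ ℝ) a b =
      S a b + (Sᵀ * B * X) b a + (S * B * X) a b + (Xᵀ * (Bᵀ * S * B) * X) a b := by
    intro X
    have : ((1 + B * X)ᵀ * S * (1 + B * X) : Matrix κ κ ℝ) =
        S + (Sᵀ * B * X)ᵀ + S * B * X + Xᵀ * (Bᵀ * S * B) * X := by
      simp only [transpose_add, transpose_one, transpose_mul, transpose_transpose,
        Matrix.add_mul, Matrix.mul_add, Matrix.one_mul, Matrix.mul_one, Matrix.mul_assoc]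
      abel
    rw [this, Matrix.add_apply, Matrix.add_apply, Matrix.add_apply, transpose_apply]
  have hlin : ∀ (C : Matrix κ ι ℝ) (c d : κ),
      Integrable (fun x : ι × κ → ℝ => (C * of fun i j => x (i, j)) c d) (Measure.pi fun _ => μ) :=
    fun C c d => (memLp_mul_apply hμ C c d).integrable one_le_two
  simp_rw [expand]
  rw [integral_add ?_ (integrable_transpose_mul_mul_apply hμ _ _ _),
    integral_add ?_ (hlin _ _ _), integral_add (integrable_const _) (hlin _ _ _),
    integral_mul_apply hμ hμ0, integral_mul_apply hμ hμ0, integral_transpose_mul_mul_apply hμ hμ0]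
  · simp
  · exact (integrable_const _).add (hlin _ _ _)
  · exact ((integrable_const _).add (hlin _ _ _)).add (hlin _ _ _)

lemma integral_mul_transpose_mul_apply {κ' : Type*} (hμ : MemLp id 2 μ)
    (hμ0 : ∫ t, t ∂μ = 0) (G : Matrix κ κ' ℝ) (a b : κ') :
    ∫ x : ι × κ → ℝ, ((of (fun i j => x (i, j)) * G)ᵀ * (of (fun i j => x (i, j)) * G)) a b
        ∂Measure.pi (fun _ => μ) = Var[id; μ] * Fintype.card ι * (Gᵀ * G) a b := by
  classical
  have expand : ∀ X : Matrix ι κ ℝ, ((X * G)ᵀ * (X * G)) a b =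
      ∑ j, ∑ k, (Xᵀ * (1 : Matrix ι ι ℝ) * X) j k * (G j a * G k b) := by
    intro X
    rw [← transpose_mul_mul_apply_eq_sum]
    simp only [transpose_mul, Matrix.mul_one, Matrix.mul_assoc]
  simp_rw [expand]
  rw [integral_finsetSum (f := fun j (x : ι × κ → ℝ) => ∑ k,
      ((of fun i j => x (i, j))ᵀ * (1 : Matrix ι ι ℝ) * of fun i j => x (i, j)) j k *
        (G j a * G k b)) _
    fun j _ => integrable_finsetSum _ fun k _ =>
      (integrable_transpose_mul_mul_apply hμ _ _ _).mul_const _]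
  simp_rw [integral_finsetSum _ fun k _ =>
      (integrable_transpose_mul_mul_apply hμ _ _ _).mul_const _, integral_mul_const, integral_transpose_mul_mul_apply hμ hμ0, trace_one, one_apply]
  simp [mul_apply, Finset.mul_sum, mul_assoc]

end IidEntries

lemma MeasureTheory.MemLp.mul_prod {α β : Type*} [MeasurableSpace α] [MeasurableSpace β]
    {μ : Measure α} {ν : Measure β} {f : α → ℝ} {g : β → ℝ} (hf : MemLp f 2 μ) (hg : MemLp g 2 ν) :
    MemLp (fun z : α × β => f z.1 * g z.2) 2 (μ.prod ν) :=
  (memLp_two_iff_integrable_sq (hf.1.comp_fst.mul hg.1.comp_snd)).2 <| by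
    simpa only [Pi.mul_apply, mul_pow] using hf.integrable_sq.mul_prod hg.integrable_sq

lemma integral_prod_mul_transpose_mul_apply {ι κ κ' Ω : Type*} [Fintype ι] [Fintype κ]
    [MeasurableSpace Ω] {μ : Measure ℝ} [IsProbabilityMeasure μ] {ν : Measure Ω} [SFinite ν]
    (hμ : MemLp id 2 μ) (hμ0 : ∫ t, t ∂μ = 0) (G : Ω → Matrix κ κ' ℝ)
    (hG : ∀ j a, MemLp (fun ω => G ω j a) 2 ν) (a b : κ') :
    ∫ p : (ι × κ → ℝ) × Ω, ((of (fun i j => p.1 (i, j)) * G p.2)ᵀ *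
        (of (fun i j => p.1 (i, j)) * G p.2)) a b ∂(Measure.pi (fun _ => μ)).prod ν =
      Var[id; μ] * Fintype.card ι * ∫ ω, ((G ω)ᵀ * G ω) a b ∂ν := by
  have hentry : ∀ i a, MemLp (fun p : (ι × κ → ℝ) × Ω =>
      (of (fun i j => p.1 (i, j)) * G p.2) i a) 2 ((Measure.pi fun _ => μ).prod ν) := by
    intro i a
    simp only [mul_apply, of_apply]
    exact memLp_finsetSum _ fun j _ => (memLp_eval_pi hμ (i, j)).mul_prod (hG j a)
  have hint : Integrable (fun p : (ι × κ → ℝ) × Ω => ((of (fun i j => p.1 (i, j)) * G p.2)ᵀ *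
      (of (fun i j => p.1 (i, j)) * G p.2)) a b) ((Measure.pi fun _ => μ).prod ν) := by
    simp only [mul_apply (M := _ᵀ), transpose_apply]
    exact integrable_finsetSum _ fun i _ => (hentry i a).integrable_mul (hentry i b)
  rw [integral_prod_symm _ hint]
  simp_rw [integral_mul_transpose_mul_apply hμ hμ0]
  rw [integral_const_mul]

section Centering

variable (ι : Type*) [Fintype ι] [DecidableEq ι]

noncomputable def centeringMatrix : Matrix ι ι ℝ :=
  1 - (Fintype.card ι : ℝ)⁻¹ • of fun _ _ => 1

lemma centeringMatrix_transpose : (centeringMatrix ι)ᵀ = centeringMatrix ι := by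
  rw [centeringMatrix, transpose_sub, transpose_one, transpose_smul]
  rfl

lemma centeringMatrix_mul_self [Nonempty ι] :
    centeringMatrix ι * centeringMatrix ι = centeringMatrix ι := by
  have hJ : (of fun _ _ => 1 : Matrix ι ι ℝ) * (of fun _ _ => 1) =
      (Fintype.card ι : ℝ) • of fun _ _ => 1 := by
    ext i j
    simp [mul_apply]
  have hcard : (Fintype.card ι : ℝ) ≠ 0 := Nat.cast_ne_zero.2 Fintype.card_ne_zero
  rw [centeringMatrix, sub_mul, mul_sub, mul_sub, Matrix.one_mul, Matrix.mul_one, Matrix.one_mul,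
    Matrix.smul_mul, Matrix.mul_smul, hJ, smul_smul, smul_smul, inv_mul_cancel_right₀ hcard]
  abel

lemma trace_centeringMatrix_conj [Nonempty ι] (S : Matrix ι ι ℝ) :
    ((centeringMatrix ι)ᵀ * S * centeringMatrix ι).trace =
      S.trace - (Fintype.card ι : ℝ)⁻¹ * ∑ i, ∑ j, S i j := by
  rw [trace_mul_cycle, centeringMatrix_transpose, centeringMatrix_mul_self, trace_mul_comm]
  simp [centeringMatrix, Matrix.mul_sub, trace, mul_apply, Finset.mul_sum, Finset.sum_mul, mul_comm]

end Centering

lemma centered_eq_centeringMatrix_mul (m : ℕ) (W : Fin m × Fin m → ℝ) :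
    centered m W = centeringMatrix (Fin m) * of fun i j => W (i, j) := by
  ext i j
  simp [centered, centeringMatrix, sub_mul, mul_apply, one_apply, Finset.mul_sum]

theorem mixit_covariance_drift_general (n m : ℕ) (hn : 1 ≤ n)
    (h : Matrix (Fin n) (Fin m) ℝ) (α β : Fin m) :
    (∫ p : ((Fin n × Fin n) → ℝ) × ((Fin m × Fin m) → ℝ),
        (((n : ℝ)⁻¹ • ((mixitStep n m h p)ᵀ * mixitStep n m h p)) α β)
        ∂(Measure.prod
            (Measure.pi fun _ : Fin n × Fin n => gaussianReal 0 (1 / (n : ℝ≥0)))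
            (Measure.pi fun _ : Fin m × Fin m => gaussianReal 0 1))) =
      ((n : ℝ)⁻¹ • (hᵀ * h)) α β +
        (1 / (n : ℝ)) *
          ((1 / (m : ℝ)) * ((n : ℝ)⁻¹ • (hᵀ * h)).trace -
            (1 / (m : ℝ) ^ 2) *
              ∑ γ : Fin m, ∑ δ : Fin m, ((n : ℝ)⁻¹ • (hᵀ * h)) γ δ) *
          (if α = β then (1 : ℝ) else 0) := by
  have : Nonempty (Fin m) := ⟨α⟩
  have hμ : ∀ v : ℝ≥0, MemLp id 2 (gaussianReal 0 v) := fun _ =>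
    memLp_id_gaussianReal' 2 (by norm_num)
  have hn0 : (n : ℝ) ≠ 0 := Nat.cast_ne_zero.2 (by omega)
  have hm0 : (m : ℝ) ≠ 0 := Nat.cast_ne_zero.2 (Fin.pos α).ne'
  set c := (Real.sqrt ((n : ℝ) * m))⁻¹
  have hc : c * c = ((n : ℝ) * m)⁻¹ := by
    rw [← mul_inv, Real.mul_self_sqrt (by positivity)]
  set B := c • centeringMatrix (Fin m)
  have hstep : ∀ p : ((Fin n × Fin n) → ℝ) × ((Fin m × Fin m) → ℝ), mixitStep n m h p =
      of (fun i j => p.1 (i, j)) * (h * (1 + B * of fun i j => p.2 (i, j))) := fun p => by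
    rw [mixitStep, centered_eq_centeringMatrix_mul, Matrix.smul_mul, Matrix.mul_assoc]
  have hG : ∀ j a, MemLp (fun w : Fin m × Fin m → ℝ =>
      (h * (1 + B * of fun i j => w (i, j)) : Matrix (Fin n) (Fin m) ℝ) j a) 2
      (Measure.pi fun _ => gaussianReal 0 1) := fun j a => by
    simp only [Matrix.mul_add, Matrix.mul_one, ← Matrix.mul_assoc, Matrix.add_apply]
    exact (memLp_const (h j a)).add (memLp_mul_apply (hμ 1) (h * B) j a)
  simp_rw [hstep, Matrix.smul_apply, smul_eq_mul]
  rw [integral_const_mul, integral_prod_mul_transpose_mul_apply (hμ _)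
    integral_id_gaussianReal _ hG]
  simp_rw [Matrix.transpose_mul_mul_self_eq]
  rw [integral_conj_one_add_mul_apply (hμ _) integral_id_gaussianReal,
    variance_id_gaussianReal, variance_id_gaussianReal]
  simp only [B, transpose_smul, Matrix.smul_mul, Matrix.mul_smul, trace_smul, smul_eq_mul,
    trace_centeringMatrix_conj, one_apply, Fintype.card_fin, ← Finset.mul_sum,
    NNReal.coe_one, NNReal.coe_div, NNReal.coe_natCast, ← mul_assoc c c, hc]
  field_simp

theorem mixit_covariance_drift (n m : ℕ) (hn : 1 ≤ n) (hm : 1 ≤ m)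
    (h : Matrix (Fin n) (Fin m) ℝ) (α β : Fin m) :
    (∫ p : ((Fin n × Fin n) → ℝ) × ((Fin m × Fin m) → ℝ),
        (((n : ℝ)⁻¹ • ((mixitStep n m h p)ᵀ * mixitStep n m h p)) α β)
        ∂(Measure.prod
            (Measure.pi fun _ : Fin n × Fin n => gaussianReal 0 (1 / (n : ℝ≥0)))
            (Measure.pi fun _ : Fin m × Fin m => gaussianReal 0 1))) =
      ((n : ℝ)⁻¹ • (hᵀ * h)) α β +
        (1 / (n : ℝ)) *
          ((1 / (m : ℝ)) * ((n : ℝ)⁻¹ • (hᵀ * h)).trace -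
            (1 / (m : ℝ) ^ 2) *
              ∑ γ : Fin m, ∑ δ : Fin m, ((n : ℝ)⁻¹ • (hᵀ * h)) γ δ) *
          (if α = β then (1 : ℝ) else 0) :=
  mixit_covariance_drift_general n m hn h α β
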